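/- Let B be a finite-dimensional complex vector space, E = ℂ ⊕ B, and θ : E → E ⊗ B the co-Higgs-type map θ(a, b) = Σ_i (e^i(b), 0) ⊗ e_i for a basis (e_i) of B with dual basis (e^i) (independent of the choice of basis). If F ⊆ E is a subspace with θ(F) ⊆ F ⊗ B and F ∩ (0 ⊕ B) ≠ 0, then F ∩ (ℂ ⊕ 0) ≠ 0, and consequently F = (F ∩ (ℂ ⊕ 0)) ⊕ (F ∩ (0 ⊕ B)). -/
import Mathlib


open TensorProduct

/-- `E = ℂ ⊕ B` with the co-Higgs-type map `θ(a,b) = (1,0) ⊗ b`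
(the basis-independent form of `θ(a,b) = Σᵢ (eⁱ(b),0) ⊗ eᵢ`). If `F ⊆ E` is
`θ`-invariant and `F ∩ (0 ⊕ B) ≠ 0`, then `F ∩ (ℂ ⊕ 0) ≠ 0`, and consequently
`F = (F ∩ (ℂ ⊕ 0)) ⊕ (F ∩ (0 ⊕ B))`. -/
theorem stmt6 {B : Type*} [AddCommGroup B] [Module ℂ B] [FiniteDimensional ℂ B]
    (θ : (ℂ × B) →ₗ[ℂ] (ℂ × B) ⊗[ℂ] B)
    (hθ : θ = (TensorProduct.mk ℂ (ℂ × B) B ((1 : ℂ), (0 : B))).comp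
      (LinearMap.snd ℂ ℂ B))
    (F : Submodule ℂ (ℂ × B))
    (hinv : ∀ x ∈ F, θ x ∈ LinearMap.range
      (TensorProduct.map F.subtype (LinearMap.id : B →ₗ[ℂ] B)))
    (hB : ∃ x ∈ F, x.1 = 0 ∧ x ≠ 0) :
    (∃ x ∈ F, x.2 = 0 ∧ x ≠ 0) ∧
      F = (F ⊓ LinearMap.range (LinearMap.inl ℂ ℂ B)) ⊔
            (F ⊓ LinearMap.range (LinearMap.inr ℂ ℂ B)) := by
  obtain ⟨x, hxF, hx1, hx0⟩ := hB
  have hb : x.2 ≠ 0 := by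
    intro h
    exact hx0 (Prod.ext hx1 h)
  obtain ⟨φ, hφ⟩ : ∃ φ : Module.Dual ℂ B, φ x.2 ≠ 0 := by
    by_contra h
    push_neg at h
    exact hb ((Module.forall_dual_apply_eq_zero_iff ℂ x.2).mp h)
  set ψ : (ℂ × B) ⊗[ℂ] B →ₗ[ℂ] (ℂ × B) :=
    (TensorProduct.rid ℂ (ℂ × B)).toLinearMap.comp (LinearMap.lTensor (ℂ × B) φ) with hψ
  have hψF : ∀ t ∈ LinearMap.range (TensorProduct.map F.subtype
      (LinearMap.id : B →ₗ[ℂ] B)), ψ t ∈ F := by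
    rintro t ⟨s, rfl⟩
    induction s using TensorProduct.induction_on with
    | zero => simp
    | tmul f c =>
        have : ψ (TensorProduct.map F.subtype LinearMap.id (f ⊗ₜ[ℂ] c))
            = φ c • (f : ℂ × B) := by
          simp [hψ]
        rw [this]
        exact F.smul_mem _ f.2
    | add s t hs ht =>
        rw [map_add, map_add]
        exact F.add_mem hs ht
  have h1 : ((1:ℂ), (0:B)) ∈ F := by
    have hm := hψF _ (hinv x hxF)
    have hval : ψ (θ x) = φ x.2 • ((1:ℂ), (0:B)) := by
      simp [hθ, hψ]
    rw [hval] at hm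
    have := F.smul_mem (φ x.2)⁻¹ hm
    rwa [smul_smul, inv_mul_cancel₀ hφ, one_smul] at this
  refine ⟨⟨((1:ℂ),(0:B)), h1, rfl, by simp⟩, ?_⟩
  apply le_antisymm
  · intro y hy
    have hyl : (y.1, (0:B)) ∈ F := by
      have := F.smul_mem y.1 h1
      simpa using this
    have hyr : ((0:ℂ), y.2) ∈ F := by
      have h' : ((0:ℂ), y.2) = y - (y.1, (0:B)) := by ext <;> simp
      rw [h']
      exact F.sub_mem hy hyl
    have hysplit : y = (y.1, (0:B)) + ((0:ℂ), y.2) := by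
      ext <;> simp
    rw [hysplit]
    exact Submodule.add_mem _
      (Submodule.mem_sup_left ⟨hyl, ⟨y.1, rfl⟩⟩)
      (Submodule.mem_sup_right ⟨hyr, ⟨y.2, rfl⟩⟩)
  · exact sup_le inf_le_left inf_le_left
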